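/- arXiv:1605.00110 — 2 statements merged into one kernel-verified Lean document; each statement's English description precedes it below -/
import Mathlib

section
/- Let M = A − BΨA with spectral norm ‖M‖ < 1, and let Q, T be positive definite symmetric matrices with Mᵀ Q M − Q = −T (discrete Lyapunov equation). Define Θ = (1/μ_min(T))·(‖Mᵀ Q‖ + (‖Mᵀ Q‖² + μ_min(T)‖Q‖)^{1/2}). Then for any vectors x and d with x(+) = M x + d, if ‖x‖ > Θ‖d‖ then xᵀ(+) Q x(+) − xᵀ Q x < 0, i.e., the Lyapunov function V(x) = xᵀ Q x strictly decreases whenever the state norm exceeds Θ times the disturbance norm. -/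
open Matrix
open scoped Matrix.Norms.L2Operator

/-!
With the Lyapunov equation, `V(Mx + d) - V(x) = -xᵀTx + 2 xᵀMᵀQd + dᵀQd`, which is at most
`-μ ‖x‖² + 2 ‖MᵀQ‖ ‖x‖ ‖d‖ + ‖Q‖ ‖d‖²` with `μ = μ_min(T)`. As a quadratic in `‖x‖` this is
negative beyond its larger root, which is exactly `Θ ‖d‖`.
-/

namespace Matrix

variable {m n : Type*} [Fintype m] [Fintype n]

section Quadratic

variable {R : Type*} [CommRing R]

lemma add_dotProduct_mulVec_add_of_isSymm {Q : Matrix n n R} (hQ : Q.IsSymm) (y d : n → R) :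
    (y + d) ⬝ᵥ (Q *ᵥ (y + d)) = y ⬝ᵥ (Q *ᵥ y) + 2 * (y ⬝ᵥ (Q *ᵥ d)) + d ⬝ᵥ (Q *ᵥ d) := by
  have hswap : d ⬝ᵥ (Q *ᵥ y) = y ⬝ᵥ (Q *ᵥ d) := by
    rw [← dotProduct_transpose_mulVec, hQ.eq]
  rw [mulVec_add, add_dotProduct, dotProduct_add, dotProduct_add, hswap]
  ring

lemma mulVec_dotProduct (A : Matrix m n R) (v : n → R) (w : m → R) :
    (A *ᵥ v) ⬝ᵥ w = v ⬝ᵥ (Aᵀ *ᵥ w) := by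
  rw [dotProduct_mulVec, vecMul_transpose]

lemma mulVec_add_dotProduct_mulVec_sub_of_isSymm {M Q : Matrix n n R} (hQ : Q.IsSymm)
    (x d : n → R) :
    (M *ᵥ x + d) ⬝ᵥ (Q *ᵥ (M *ᵥ x + d)) - x ⬝ᵥ (Q *ᵥ x) =
      x ⬝ᵥ ((Mᵀ * Q * M - Q) *ᵥ x) + 2 * (x ⬝ᵥ ((Mᵀ * Q) *ᵥ d)) + d ⬝ᵥ (Q *ᵥ d) := by
  rw [add_dotProduct_mulVec_add_of_isSymm hQ, mulVec_dotProduct, mulVec_dotProduct,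
    mulVec_mulVec, mulVec_mulVec, mulVec_mulVec, sub_mulVec, dotProduct_sub]
  ring

end Quadratic

section Eigenvalues

variable [DecidableEq n]

open scoped MatrixOrder ComplexOrder in
lemma IsHermitian.posSemidef_sub_algebraMap {𝕜 : Type*} [RCLike 𝕜] {A : Matrix n n 𝕜}
    (hA : A.IsHermitian) {c : ℝ} (hc : ∀ i, c ≤ hA.eigenvalues i) :
    (A - algebraMap ℝ _ c).PosSemidef := by
  rw [← le_iff, algebraMap_le_iff_le_spectrum hA, hA.spectrum_real_eq_range_eigenvalues]
  rintro _ ⟨i, rfl⟩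
  exact hc i

lemma IsHermitian.iInf_eigenvalues_mul_dotProduct_self_le {A : Matrix n n ℝ}
    (hA : A.IsHermitian) (v : n → ℝ) :
    (⨅ i, hA.eigenvalues i) * (v ⬝ᵥ v) ≤ v ⬝ᵥ (A *ᵥ v) := by
  have hle : ∀ i, (⨅ i, hA.eigenvalues i) ≤ hA.eigenvalues i :=
    ciInf_le (Set.finite_range _).bddBelow
  have hnonneg := (hA.posSemidef_sub_algebraMap hle).dotProduct_mulVec_nonneg v
  simpa [Algebra.algebraMap_eq_smul_one, sub_mulVec, dotProduct_sub, smul_mulVec] using hnonneg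

lemma PosDef.iInf_eigenvalues_pos [Nonempty n] {A : Matrix n n ℝ} (hA : A.PosDef) :
    0 < ⨅ i, hA.isHermitian.eigenvalues i := by
  obtain ⟨i, hi⟩ := exists_eq_ciInf_of_finite (f := hA.isHermitian.eigenvalues)
  exact hi ▸ hA.eigenvalues_pos i

end Eigenvalues

lemma dotProduct_mulVec_le_l2_opNorm [DecidableEq n] (A : Matrix m n ℝ) (v : EuclideanSpace ℝ m)
    (w : EuclideanSpace ℝ n) : ⇑v ⬝ᵥ (A *ᵥ ⇑w) ≤ ‖A‖ * ‖v‖ * ‖w‖ :=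
  calc ⇑v ⬝ᵥ (A *ᵥ ⇑w) = inner ℝ v ((EuclideanSpace.equiv m ℝ).symm (A *ᵥ ⇑w)) := by
        rw [EuclideanSpace.inner_eq_star_dotProduct, star_trivial, dotProduct_comm]; rfl
    _ ≤ ‖v‖ * (‖A‖ * ‖w‖) :=
        (real_inner_le_norm _ _).trans (by gcongr; exact A.l2_opNorm_mulVec w)
    _ = ‖A‖ * ‖v‖ * ‖w‖ := by ring

end Matrix

lemma EuclideanSpace.dotProduct_self {n : Type*} [Fintype n] (x : EuclideanSpace ℝ n) :
    ⇑x ⬝ᵥ ⇑x = ‖x‖ ^ 2 := by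
  rw [← real_inner_self_eq_norm_sq, EuclideanSpace.inner_eq_star_dotProduct, star_trivial]

lemma mul_sq_lt_of_root_mul_lt {μ a q δ ξ : ℝ} (hμ : 0 < μ) (hq : 0 ≤ q) (hδ : 0 ≤ δ)
    (h : (1 / μ) * (a + √(a ^ 2 + μ * q)) * δ < ξ) :
    2 * a * ξ * δ + q * δ ^ 2 < μ * ξ ^ 2 := by
  set c := √(a ^ 2 + μ * q)
  have hc : 0 ≤ c := Real.sqrt_nonneg _
  have hc2 : c ^ 2 = a ^ 2 + μ * q := Real.sq_sqrt (by positivity)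
  have hroot : (a + c) * δ < μ * ξ :=
    calc (a + c) * δ = μ * ((1 / μ) * (a + c) * δ) := by field_simp
      _ < μ * ξ := by gcongr
  have hfactor : (μ * ξ - (a + c) * δ) * (μ * ξ - (a - c) * δ) =
      μ * (μ * ξ ^ 2 - (2 * a * ξ * δ + q * δ ^ 2)) := by
    linear_combination (-δ ^ 2) * hc2
  have hpos : 0 < (μ * ξ - (a + c) * δ) * (μ * ξ - (a - c) * δ) := by
    have : 0 < μ * ξ - (a - c) * δ := by linarith [mul_nonneg hc hδ]
    exact mul_pos (by linarith) this
  rw [hfactor] at hpos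
  exact sub_pos.mp (pos_of_mul_pos_right hpos hμ.le)

theorem lyapunov_drift_negative_general {K : ℕ}
    (M Q T : Matrix (Fin K) (Fin K) ℝ)
    (hQ : Q.PosDef) (hT : T.PosDef)
    (hLyap : Mᵀ * Q * M - Q = -T)
    (Θ : ℝ)
    (hΘ : Θ = (1 / ⨅ i, hT.isHermitian.eigenvalues i) *
      (‖Mᵀ * Q‖ +
        Real.sqrt (‖Mᵀ * Q‖ ^ 2 + (⨅ i, hT.isHermitian.eigenvalues i) * ‖Q‖)))
    (x d : EuclideanSpace ℝ (Fin K))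
    (hx : Θ * ‖d‖ < ‖x‖) :
    (M *ᵥ ⇑x + ⇑d) ⬝ᵥ (Q *ᵥ (M *ᵥ ⇑x + ⇑d)) - ⇑x ⬝ᵥ (Q *ᵥ ⇑x) < 0 := by
  have : Nonempty (Fin K) := by
    by_contra hempty
    rw [not_nonempty_iff] at hempty
    simp [Subsingleton.elim x 0, Subsingleton.elim d 0] at hx
  have hdrift := mul_sq_lt_of_root_mul_lt hT.iInf_eigenvalues_pos (norm_nonneg Q)
    (norm_nonneg d) (hΘ ▸ hx)
  have hTx := hT.isHermitian.iInf_eigenvalues_mul_dotProduct_self_le x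
  rw [EuclideanSpace.dotProduct_self] at hTx
  have hcross := dotProduct_mulVec_le_l2_opNorm (Mᵀ * Q) x d
  have hdQd := dotProduct_mulVec_le_l2_opNorm Q d d
  rw [mulVec_add_dotProduct_mulVec_sub_of_isSymm (isHermitian_iff_isSymm.mp hQ.isHermitian),
    hLyap, neg_mulVec, dotProduct_neg]
  linarith

/-- Discrete Lyapunov drift: with `MᵀQM − Q = −T` (`Q, T ≻ 0`, `‖M‖ < 1`) and
`Θ = (1/μ_min(T))(‖MᵀQ‖ + √(‖MᵀQ‖² + μ_min(T)‖Q‖))`, the Lyapunov function `V(x) = xᵀQx`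
strictly decreases along `x⁺ = Mx + d` whenever `‖x‖ > Θ‖d‖`. -/
theorem lyapunov_drift_negative {K : ℕ} [NeZero K]
    (M Q T : Matrix (Fin K) (Fin K) ℝ)
    (hM : ‖M‖ < 1) (hQ : Q.PosDef) (hT : T.PosDef)
    (hLyap : Mᵀ * Q * M - Q = -T)
    (Θ : ℝ)
    (hΘ : Θ = (1 / ⨅ i, hT.isHermitian.eigenvalues i) *
      (‖Mᵀ * Q‖ +
        Real.sqrt (‖Mᵀ * Q‖ ^ 2 + (⨅ i, hT.isHermitian.eigenvalues i) * ‖Q‖)))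
    (x d : EuclideanSpace ℝ (Fin K))
    (hx : Θ * ‖d‖ < ‖x‖) :
    (M *ᵥ ⇑x + ⇑d) ⬝ᵥ (Q *ᵥ (M *ᵥ ⇑x + ⇑d)) - ⇑x ⬝ᵥ (Q *ᵥ ⇑x) < 0 :=
  lyapunov_drift_negative_general M Q T hQ hT hLyap Θ hΘ x d hx
end

section
/- Let f(G̃) = (a/2)·Tr(2 G̃ᵀ Π₀ G̃ + Σ⁻¹)⁻¹ + b·Tr(G̃ᵀ G̃) with a, b > 0, Π₀ ⪰ 0, and Σ ≻ 0. If G̃ = G̃₁ + G̃₂ where the columns of G̃₁ lie in the column span of Π₀ and the columns of G̃₂ lie in its orthogonal complement, then f(G̃₁) ≤ f(G̃). Hence any minimizer of f has columns contained in the column span of Π₀. -/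
open Matrix

/-- Restricting the precoder to the column span of `Π₀` does not increase the objective
`f(G̃) = (a/2)·Tr(2 G̃ᵀ Π₀ G̃ + Σ⁻¹)⁻¹ + b·Tr(G̃ᵀ G̃)`: if `G̃ = G̃₁ + G̃₂` with
`G̃₁` in the column span of `Π₀` and `Π₀ G̃₂ = 0`, then `f(G̃₁) ≤ f(G̃)`. -/
theorem precoder_column_space_reduction {n K : ℕ} (a b : ℝ) (ha : 0 < a) (hb : 0 < b)
    (P : Matrix (Fin n) (Fin n) ℝ) (hP : P.PosSemidef)
    (S : Matrix (Fin K) (Fin K) ℝ) (hS : S.PosDef)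
    (G G₁ G₂ : Matrix (Fin n) (Fin K) ℝ)
    (hsum : G = G₁ + G₂)
    (hG₁ : ∃ C : Matrix (Fin n) (Fin K) ℝ, G₁ = P * C)
    (hG₂ : P * G₂ = 0) :
    (a / 2) * (((2 : ℝ) • (G₁ᵀ * P * G₁) + S⁻¹)⁻¹).trace + b * (G₁ᵀ * G₁).trace
      ≤ (a / 2) * (((2 : ℝ) • (Gᵀ * P * G) + S⁻¹)⁻¹).trace + b * (Gᵀ * G).trace := by
  obtain ⟨C, hC⟩ := hG₁
  have hPsymm : Pᵀ = P := hP.1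
  have hG₂P : G₂ᵀ * P = 0 := by
    have : (P * G₂)ᵀ = 0 := by rw [hG₂]; simp
    rwa [Matrix.transpose_mul, hPsymm] at this
  have hquad : Gᵀ * P * G = G₁ᵀ * P * G₁ := by
    subst hsum
    simp [Matrix.transpose_add, Matrix.add_mul, Matrix.mul_add, hG₂,
      Matrix.mul_assoc, hG₂P]
  have hcross : G₁ᵀ * G₂ = 0 := by
    rw [hC, Matrix.transpose_mul, hPsymm, Matrix.mul_assoc, hG₂, Matrix.mul_zero]
  have hcross' : G₂ᵀ * G₁ = 0 := by
    have : (G₁ᵀ * G₂)ᵀ = 0 := by rw [hcross]; simp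
    simpa using this
  have htr : (Gᵀ * G).trace = (G₁ᵀ * G₁).trace + (G₂ᵀ * G₂).trace := by
    subst hsum
    simp [Matrix.transpose_add, Matrix.add_mul, Matrix.mul_add, hcross, hcross']
  have hnn : 0 ≤ (G₂ᵀ * G₂).trace := by
    simp only [Matrix.trace, Matrix.diag_apply, Matrix.mul_apply, Matrix.transpose_apply]
    refine Finset.sum_nonneg fun i _ => Finset.sum_nonneg fun j _ => mul_self_nonneg _
  rw [hquad, htr]
  have hb' : b * (G₁ᵀ * G₁).trace ≤ b * ((G₁ᵀ * G₁).trace + (G₂ᵀ * G₂).trace) :=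
    by nlinarith
  linarith
end
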